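/- The polynomial p(x) = 2x⁴ − 5x³ − 7x² + 10x + 8 is irreducible over ℚ, and for any root α of p in ℂ, the quartic number field ℚ(α) is a Galois extension of ℚ whose Galois group is cyclic of order 4; i.e. ℚ(α) is a cyclic quartic number field. -/

import Mathlib

open Polynomial
open scoped IntermediateField

/-!
The polynomial `8 p(y / 2) = y⁴ - 5y³ - 14y² + 40y + 64` is monic over `ℤ` and reduces modulo `3`
to the cyclotomic polynomial `Φ₅`, which is irreducible over `𝔽₃` because `3` has order `4`
modulo `5`; hence `p` is irreducible.

The rational polynomial `θ(x) = (-2x³ + 9x² - 3x - 12) / 4` maps roots of `p` to roots of `p`,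
and modulo `p` the iterate `θ ∘ θ` is the polynomial `c(x) = (2x³ - 5x² - 7x + 10) / 4`, an
involution on the roots without fixed points. So `α ↦ θ(α)` extends to an automorphism of
`ℚ(α)` of order `4 = [ℚ(α) : ℚ]`. An extension has at most as many automorphisms as its degree,
so the automorphism group is generated by this one and has order equal to the degree: the
extension is Galois with cyclic group.
-/

theorem card_algEquiv_eq_finrank_of_orderOf_eq {F K : Type*} [Field F] [Field K] [Algebra F K]
    [FiniteDimensional F K] {σ : K ≃ₐ[F] K} (hσ : orderOf σ = Module.finrank F K) :
    Nat.card (K ≃ₐ[F] K) = Module.finrank F K :=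
  le_antisymm (Nat.card_eq_fintype_card (α := K ≃ₐ[F] K) ▸ AlgEquiv.card_le)
    (hσ ▸ orderOf_le_card)

namespace IntermediateField.AdjoinSimple

variable {F E : Type*} [Field F] [Field E] [Algebra F E] {α : E}

theorem exists_algEquiv_apply_gen_eq (hα : IsIntegral F α) {β : F⟮α⟯}
    (hβ : aeval β (minpoly F α) = 0) : ∃ σ : F⟮α⟯ ≃ₐ[F] F⟮α⟯, σ (gen F α) = β := by
  let pb := adjoin.powerBasis hα
  have hβ' : aeval β (minpoly F pb.gen) = 0 := by
    rwa [adjoin.powerBasis_gen, minpoly_gen]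
  have := isAlgebraic_adjoin_simple hα
  exact ⟨.ofBijective (pb.lift β hβ') (Algebra.IsAlgebraic.algHom_bijective _), pb.lift_gen β hβ'⟩

theorem algEquiv_eq_one_of_apply_gen_eq {σ : F⟮α⟯ ≃ₐ[F] F⟮α⟯} (h : σ (gen F α) = gen F α) :
    σ = 1 :=
  AlgEquiv.coe_toAlgHom_injective <| adjoin_algHom_ext F fun x hx => by
    obtain rfl := Set.mem_singleton_iff.mp hx
    exact h

end IntermediateField.AdjoinSimple

theorem irreducible_cyclotomic_five_zmod_three : Irreducible (cyclotomic 5 (ZMod 3)) :=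
  ZMod.irreducible_of_dvd_cyclotomic_of_natDegree (by norm_num) dvd_rfl <| by
    rw [natDegree_cyclotomic, eq_comm, orderOf_eq_iff (by norm_num)]
    decide

noncomputable def quartic : ℚ[X] := 2 * X ^ 4 - 5 * X ^ 3 - 7 * X ^ 2 + 10 * X + 8

noncomputable def monicQuartic : ℤ[X] := X ^ 4 - 5 * X ^ 3 - 14 * X ^ 2 + 40 * X + 64

theorem irreducible_monicQuartic : Irreducible monicQuartic := by
  refine Monic.irreducible_of_irreducible_map (Int.castRingHom (ZMod 3)) _
    (by unfold monicQuartic; monicity!) ?_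
  have : Fact (Nat.Prime 5) := ⟨by norm_num⟩
  convert irreducible_cyclotomic_five_zmod_three using 1
  have h3 : (3 : (ZMod 3)[X]) = 0 := CharP.cast_eq_zero _ 3
  simp only [monicQuartic, cyclotomic_prime, Finset.sum_range_succ, Finset.sum_range_zero,
    Polynomial.map_add, Polynomial.map_sub, Polynomial.map_mul, Polynomial.map_pow,
    Polynomial.map_X, Polynomial.map_ofNat]
  linear_combination (-2 * X ^ 3 - 5 * X ^ 2 + 13 * X + 21) * h3

theorem quartic_eq_C_mul_monicQuartic_comp :
    quartic = C 8⁻¹ * algEquivCMulXAddC (2 : ℚ) 0 (monicQuartic.map (algebraMap ℤ ℚ)) := by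
  simp only [quartic, monicQuartic, algEquivCMulXAddC_apply, Polynomial.map_add,
    Polynomial.map_sub, Polynomial.map_mul, Polynomial.map_pow, Polynomial.map_X,
    Polynomial.map_ofNat, map_add, map_sub, map_mul, map_pow, aeval_X, map_ofNat, C_0, add_zero]
  have h8 : (C 8⁻¹ * 8 : ℚ[X]) = 1 := by rw [← map_ofNat C 8, ← C_mul]; norm_num
  linear_combination (-(2 * X ^ 4 - 5 * X ^ 3 - 7 * X ^ 2 + 10 * X + 8 : ℚ[X])) * h8

theorem irreducible_quartic : Irreducible quartic := by
  have hℚ := (Monic.irreducible_iff_irreducible_map_fraction_map (K := ℚ)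
    (by unfold monicQuartic; monicity!)).mp irreducible_monicQuartic
  rw [quartic_eq_C_mul_monicQuartic_comp, irreducible_isUnit_mul (isUnit_C.mpr (by norm_num))]
  exact (MulEquiv.irreducible_iff (algEquivCMulXAddC (2 : ℚ) 0).toMulEquiv).mpr hℚ

noncomputable def rootShift : ℚ[X] := C 4⁻¹ * (-2 * X ^ 3 + 9 * X ^ 2 - 3 * X - 12)

noncomputable def rootShiftSq : ℚ[X] := C 4⁻¹ * (2 * X ^ 3 - 5 * X ^ 2 - 7 * X + 10)

section QuarticRoot

variable {E : Type*} [Field E] [CharZero E] {x : E}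

theorem aeval_quartic : aeval x quartic = 2 * x ^ 4 - 5 * x ^ 3 - 7 * x ^ 2 + 10 * x + 8 := by
  simp only [quartic, map_add, map_sub, map_mul, map_pow, aeval_X, map_ofNat]

theorem aeval_rootShift : aeval x rootShift = (-2 * x ^ 3 + 9 * x ^ 2 - 3 * x - 12) / 4 := by
  simp only [rootShift, map_add, map_sub, map_mul, map_neg, map_pow, aeval_X, aeval_C, map_inv₀,
    map_ofNat]
  ring

theorem aeval_rootShiftSq : aeval x rootShiftSq = (2 * x ^ 3 - 5 * x ^ 2 - 7 * x + 10) / 4 := by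
  simp only [rootShiftSq, map_add, map_sub, map_mul, map_pow, aeval_X, aeval_C, map_inv₀,
    map_ofNat]
  ring

theorem isIntegral_of_aeval_quartic (hx : aeval x quartic = 0) : IsIntegral ℚ x :=
  IsAlgebraic.isIntegral ⟨quartic, irreducible_quartic.ne_zero, hx⟩

theorem natDegree_minpoly_of_aeval_quartic (hx : aeval x quartic = 0) :
    (minpoly ℚ x).natDegree = 4 := by
  rw [← minpoly.eq_of_irreducible irreducible_quartic hx,
    natDegree_mul_C (inv_ne_zero (leadingCoeff_ne_zero.mpr irreducible_quartic.ne_zero))]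
  unfold quartic
  compute_degree!

theorem aeval_quartic_aeval_rootShift (hx : aeval x quartic = 0) :
    aeval (aeval x rootShift) quartic = 0 := by
  rw [aeval_quartic] at hx ⊢
  rw [aeval_rootShift]
  linear_combination (53 / 2 - 163 / 32 * x - 5667 / 128 * x ^ 2 + 3337 / 128 * x ^ 3
    + 1441 / 128 * x ^ 4 - 1961 / 128 * x ^ 5 + 369 / 64 * x ^ 6 - 31 / 32 * x ^ 7
    + 1 / 16 * x ^ 8) * hx

theorem aeval_rootShift_aeval_rootShift (hx : aeval x quartic = 0) :
    aeval (aeval x rootShift) rootShift = aeval x rootShiftSq := by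
  rw [aeval_quartic] at hx
  rw [aeval_rootShift, aeval_rootShift, aeval_rootShiftSq]
  linear_combination (61 / 16 - 249 / 128 * x - 45 / 32 * x ^ 2 + 165 / 128 * x ^ 3
    - 11 / 32 * x ^ 4 + 1 / 32 * x ^ 5) * hx

theorem aeval_rootShiftSq_aeval_rootShiftSq (hx : aeval x quartic = 0) :
    aeval (aeval x rootShiftSq) rootShiftSq = x := by
  rw [aeval_quartic] at hx
  rw [aeval_rootShiftSq, aeval_rootShiftSq]
  linear_combination (-15 / 64 - 17 / 128 * x + 45 / 64 * x ^ 2 - 3 / 128 * x ^ 3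
    - 5 / 32 * x ^ 4 + 1 / 32 * x ^ 5) * hx

theorem aeval_rootShiftSq_ne_self (hx : aeval x quartic = 0) : aeval x rootShiftSq ≠ x := by
  set q : ℚ[X] := 2 * X ^ 3 - 5 * X ^ 2 - 11 * X + 10 with hq_def
  have hq : q.natDegree = 3 := by rw [hq_def]; compute_degree!
  have hq0 : q ≠ 0 := by rintro h; simp [h] at hq
  intro h
  have hroot : aeval x q = 0 := by
    rw [aeval_rootShiftSq] at h
    simp only [hq_def, map_add, map_sub, map_mul, map_pow, aeval_X, map_ofNat]
    linear_combination 4 * h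
  have := natDegree_le_natDegree (minpoly.degree_le_of_ne_zero ℚ x hq0 hroot)
  rw [natDegree_minpoly_of_aeval_quartic hx, hq] at this
  omega

open IntermediateField.AdjoinSimple in
theorem exists_algEquiv_orderOf_eq_four {α : E} (hα : aeval α quartic = 0) :
    ∃ σ : ℚ⟮α⟯ ≃ₐ[ℚ] ℚ⟮α⟯, orderOf σ = 4 := by
  set a := gen ℚ α
  have ha : aeval a quartic = 0 := by
    apply (algebraMap ℚ⟮α⟯ E).injective
    rw [← aeval_algebraMap_apply, algebraMap_gen, hα, map_zero]
  obtain ⟨σ, hσ⟩ := exists_algEquiv_apply_gen_eq (isIntegral_of_aeval_quartic hα)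
    (β := aeval a rootShift) (by
      rw [← minpoly.eq_of_irreducible irreducible_quartic hα, map_mul]
      exact mul_eq_zero_of_left (aeval_quartic_aeval_rootShift ha) _)
  have hσ2 : (σ ^ 2) a = aeval a rootShiftSq := by
    rw [pow_two, AlgEquiv.mul_apply, hσ, ← aeval_algHom_apply, hσ,
      aeval_rootShift_aeval_rootShift ha]
  have hσ4 : σ ^ 4 = 1 := by
    refine algEquiv_eq_one_of_apply_gen_eq ?_
    rw [show 4 = 2 + 2 from rfl, pow_add, AlgEquiv.mul_apply, hσ2, ← aeval_algHom_apply, hσ2,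
      aeval_rootShiftSq_aeval_rootShiftSq ha]
  have hσ2_ne : σ ^ 2 ≠ 1 := fun h => aeval_rootShiftSq_ne_self ha (by rw [← hσ2, h]; rfl)
  exact ⟨σ, orderOf_eq_prime_pow (p := 2) (n := 1) hσ2_ne hσ4⟩

end QuarticRoot

theorem cyclic_quartic_field_alpha
    (p : ℚ[X]) (hp : p = 2 * X ^ 4 - 5 * X ^ 3 - 7 * X ^ 2 + 10 * X + 8) :
    Irreducible p ∧
    ∀ α : ℂ, aeval α p = 0 →
      Module.finrank ℚ ℚ⟮α⟯ = 4 ∧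
      IsGalois ℚ ℚ⟮α⟯ ∧
      IsCyclic (ℚ⟮α⟯ ≃ₐ[ℚ] ℚ⟮α⟯) ∧
      Nat.card (ℚ⟮α⟯ ≃ₐ[ℚ] ℚ⟮α⟯) = 4 := by
  obtain rfl : p = quartic := hp
  refine ⟨irreducible_quartic, fun α hα => ?_⟩
  have hrank : Module.finrank ℚ ℚ⟮α⟯ = 4 := by
    rw [IntermediateField.adjoin.finrank (isIntegral_of_aeval_quartic hα),
      natDegree_minpoly_of_aeval_quartic hα]
  have : FiniteDimensional ℚ ℚ⟮α⟯ := Module.finite_of_finrank_pos (by omega)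
  obtain ⟨σ, hσ⟩ := exists_algEquiv_orderOf_eq_four hα
  have hcard := card_algEquiv_eq_finrank_of_orderOf_eq (hσ.trans hrank.symm)
  exact ⟨hrank, IsGalois.of_card_aut_eq_finrank _ _ hcard,
    isCyclic_of_orderOf_eq_card σ (hσ.trans (hcard.trans hrank).symm), hcard.trans hrank⟩
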